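/- arXiv:1610.02412 — 3 statements merged into one kernel-verified Lean document; each statement's English description precedes it below -/
import Mathlib

section
/- Any solution of the mean-concentration equation with nonpositive forcing stays positive: C̄(t) > 0 for all t ≥ 0. -/
/-- Any solution of the mean-concentration equation `dC̄/dt = -k (C̄² + g)` with
nonpositive continuous forcing `g` and positive initial data stays positive. -/
theorem meanConcentration_pos (k C₀ : ℝ) (hk : 0 < k) (hC₀ : 0 < C₀)
    (g C : ℝ → ℝ)
    (hg_cont : ContinuousOn g (Set.Ici 0))
    (hg_nonpos : ∀ t ∈ Set.Ici (0 : ℝ), g t ≤ 0)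
    (hinit : C 0 = C₀)
    (hderiv : ∀ t ∈ Set.Ici (0 : ℝ),
      HasDerivWithinAt C (-k * ((C t) ^ 2 + g t)) (Set.Ici 0) t) :
    ∀ t ∈ Set.Ici (0 : ℝ), 0 < C t := by
  have hCcont : ContinuousOn C (Set.Ici 0) := fun t ht =>
    (hderiv t ht).continuousWithinAt
  by_contra h
  push_neg at h
  obtain ⟨t₀, ht₀, hCt₀⟩ := h
  -- set of times in [0, t₀] where C ≤ 0
  set S : Set ℝ := {t | t ∈ Set.Icc (0:ℝ) t₀ ∧ C t ≤ 0} with hS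
  have hSne : S.Nonempty := ⟨t₀, ⟨ht₀, le_refl _⟩, hCt₀⟩
  have hSbdd : BddBelow S := ⟨0, fun x hx => hx.1.1⟩
  set s := sInf S with hs
  have hsmem0 : ∀ x ∈ S, (0:ℝ) ≤ x := fun x hx => hx.1.1
  have hs0 : 0 ≤ s := le_csInf hSne hsmem0
  have hst₀ : s ≤ t₀ := csInf_le hSbdd ⟨⟨ht₀, le_refl _⟩, hCt₀⟩
  -- S is closed in [0, t₀]
  have hSclosed : IsClosed S := by
    have h1 : S = Set.Icc 0 t₀ ∩ C ⁻¹' Set.Iic 0 := by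
      ext x; simp [hS, Set.mem_Icc, and_assoc]
    rw [h1]
    exact (hCcont.mono (fun x hx => hx.1)).preimage_isClosed_of_isClosed isClosed_Icc isClosed_Iic
  have hsS : s ∈ S := hSclosed.csInf_mem hSne hSbdd
  have hCs : C s ≤ 0 := hsS.2
  -- on [0, s), C is positive
  have hpos : ∀ t, 0 ≤ t → t < s → 0 < C t := by
    intro t ht hts
    by_contra hle
    push_neg at hle
    exact absurd (csInf_le hSbdd ⟨⟨ht, le_trans hts.le hst₀⟩, hle⟩) (not_le.mpr hts)
  have hspos : 0 < s := by
    rcases eq_or_lt_of_le hs0 with h0 | h0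
    · exact absurd hCs (by rw [← h0, hinit]; exact not_le.mpr hC₀)
    · exact h0
  -- C s = 0 would follow, but we only need C s ≤ 0 together with a lower bound.
  -- Bound M on C on [0,s]
  have hIccsub : Set.Icc (0:ℝ) s ⊆ Set.Ici 0 := fun x hx => hx.1
  obtain ⟨z, -, hz⟩ := (isCompact_Icc (a := (0:ℝ)) (b := s)).exists_isMaxOn
    ⟨0, le_refl _, hs0⟩ (hCcont.mono hIccsub)
  set B := C z with hBdef
  have hB : ∀ x ∈ Set.Icc (0:ℝ) s, C x ≤ B := fun x hx => hz hx
  set M := k * B with hM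
  -- u t = C t * exp (M t) is monotone on [0, s]
  set u : ℝ → ℝ := fun t => C t * Real.exp (M * t) with hu
  have hucont : ContinuousOn u (Set.Icc 0 s) :=
    (hCcont.mono hIccsub).mul (Real.continuous_exp.comp (continuous_const.mul continuous_id)).continuousOn
  have hmono : MonotoneOn u (Set.Icc 0 s) := by
    apply monotoneOn_of_hasDerivWithinAt_nonneg (convex_Icc 0 s) hucont
      (f' := fun t => (-k * ((C t) ^ 2 + g t)) * Real.exp (M * t) + C t * (Real.exp (M * t) * M))
    · intro x hx
      rw [interior_Icc] at hx ⊢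
      have hx' : x ∈ Set.Ici (0:ℝ) := le_of_lt hx.1
      have h1 : HasDerivWithinAt C (-k * ((C x) ^ 2 + g x)) (Set.Ioo 0 s) x :=
        (hderiv x hx').mono (fun y hy => le_of_lt hy.1)
      have h2 : HasDerivWithinAt (fun t => Real.exp (M * t)) (Real.exp (M * x) * M) (Set.Ioo 0 s) x := by
        have := ((hasDerivAt_id x).const_mul M).exp
        simpa using this.hasDerivWithinAt
      exact h1.mul h2
    · intro x hx
      rw [interior_Icc] at hx
      have hx0 : (0:ℝ) ≤ x := hx.1.le
      have hCx : 0 < C x := hpos x hx0 hx.2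
      have hCxB : C x ≤ B := hB x ⟨hx0, hx.2.le⟩
      have hgx : g x ≤ 0 := hg_nonpos x hx0
      have hexp : 0 < Real.exp (M * x) := Real.exp_pos _
      have key : 0 ≤ -k * ((C x) ^ 2 + g x) + C x * M := by
        rw [hM]
        nlinarith [mul_nonneg (mul_nonneg hk.le hCx.le) (sub_nonneg.2 hCxB),
          mul_nonneg hk.le (neg_nonneg.2 hgx)]
      calc (0:ℝ) ≤ (-k * ((C x) ^ 2 + g x) + C x * M) * Real.exp (M * x) :=
            mul_nonneg key hexp.le
        _ = (-k * ((C x) ^ 2 + g x)) * Real.exp (M * x) + C x * (Real.exp (M * x) * M) := by ring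
  have h0mem : (0:ℝ) ∈ Set.Icc (0:ℝ) s := ⟨le_refl _, hs0⟩
  have hsmem : s ∈ Set.Icc (0:ℝ) s := ⟨hs0, le_refl _⟩
  have := hmono h0mem hsmem hs0
  have hu0 : u 0 = C₀ := by simp [hu, hinit]
  have hus : u s ≤ 0 := mul_nonpos_of_nonpos_of_nonneg hCs (Real.exp_pos _).le
  rw [hu0] at this
  linarith
end

section
/- Any solution of the mean-concentration equation with nonpositive forcing is bounded below by the well-mixed solution: C̄(t) ≥ C₀/(1 + k C₀ t) for all t ≥ 0; moreover, if g(t) < 0 for all t > 0, then the inequality is strict for t > 0, i.e. C̄(t) > C₀/(1 + k C₀ t). -/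
open Set

/-- On an interval where `C` stays positive, the reciprocal satisfies `(C b)⁻¹ ≤ C₀⁻¹ + k b`. -/
private lemma aux_inv_bound (k C₀ : ℝ) (hk : 0 < k) (hC₀ : 0 < C₀)
    (g C : ℝ → ℝ)
    (hg_nonpos : ∀ t ∈ Set.Ici (0 : ℝ), g t ≤ 0)
    (hinit : C 0 = C₀)
    (hderiv : ∀ t ∈ Set.Ici (0 : ℝ),
      HasDerivWithinAt C (-k * ((C t) ^ 2 + g t)) (Set.Ici 0) t)
    (b : ℝ) (hb : 0 ≤ b) (hpos : ∀ s ∈ Set.Icc (0:ℝ) b, 0 < C s) :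
    (C b)⁻¹ ≤ C₀⁻¹ + k * b := by
  set φ : ℝ → ℝ := fun s => C₀⁻¹ + k * s - (C s)⁻¹ with hφ
  have hCcont : ContinuousOn C (Set.Icc 0 b) := fun s hs =>
    ((hderiv s hs.1).continuousWithinAt).mono Set.Icc_subset_Ici_self
  have hφcont : ContinuousOn φ (Set.Icc 0 b) := by
    apply ContinuousOn.sub
    · exact (continuousOn_const.add (continuousOn_const.mul continuousOn_id))
    · exact hCcont.inv₀ (fun s hs => (hpos s hs).ne')
  have hint : interior (Set.Icc (0:ℝ) b) = Set.Ioo 0 b := interior_Icc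
  have hderivφ : ∀ s ∈ interior (Set.Icc (0:ℝ) b),
      HasDerivWithinAt φ (-k * g s / (C s)^2) (interior (Set.Icc 0 b)) s := by
    intro s hs
    rw [hint] at hs ⊢
    have hs0 : (0:ℝ) ≤ s := hs.1.le
    have hCs : 0 < C s := hpos s ⟨hs0, hs.2.le⟩
    have h1 : HasDerivWithinAt (fun u => (C u)⁻¹)
        (-(-k * ((C s)^2 + g s)) / (C s)^2) (Set.Ioo 0 b) s :=
      (((hderiv s hs0)).mono (Set.Ioo_subset_Icc_self.trans Set.Icc_subset_Ici_self)).inv hCs.ne'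
    have h2 : HasDerivWithinAt (fun u => C₀⁻¹ + k * u) k (Set.Ioo 0 b) s := by
      simpa using ((hasDerivWithinAt_id s (Set.Ioo (0:ℝ) b)).const_mul k).const_add C₀⁻¹
    have h3 := h2.sub h1
    have heq : k - -(-k * ((C s)^2 + g s)) / (C s)^2 = -k * g s / (C s)^2 := by
      field_simp
      ring
    rw [heq] at h3
    exact h3
  have hmono : MonotoneOn φ (Set.Icc 0 b) :=
    monotoneOn_of_hasDerivWithinAt_nonneg (convex_Icc 0 b) hφcont hderivφ
      (by
        intro s hs
        rw [hint] at hs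
        have hgs : g s ≤ 0 := hg_nonpos s hs.1.le
        have hCs : 0 < C s := hpos s ⟨hs.1.le, hs.2.le⟩
        have : 0 ≤ -k * g s := by nlinarith
        positivity)
  have h0 : φ 0 ≤ φ b := hmono (Set.left_mem_Icc.mpr hb) (Set.right_mem_Icc.mpr hb) hb
  have hφ0 : φ 0 = 0 := by simp [hφ, hinit]
  have := hφ0 ▸ h0
  simp only [hφ] at this
  linarith

/-- Converting the reciprocal bound to the stated bound. -/
private lemma aux_convert (k C₀ t c : ℝ) (hk : 0 < k) (hC₀ : 0 < C₀) (ht : 0 ≤ t)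
    (hc : 0 < c) (h : c⁻¹ ≤ C₀⁻¹ + k * t) : C₀ / (1 + k * C₀ * t) ≤ c := by
  have h1 : 0 < 1 + k * C₀ * t := by positivity
  rw [div_le_iff₀ h1]
  have h2 : (1:ℝ) ≤ c * (C₀⁻¹ + k * t) := by
    calc (1:ℝ) = c * c⁻¹ := (mul_inv_cancel₀ hc.ne').symm
    _ ≤ c * (C₀⁻¹ + k * t) := by gcongr
  have h3 : C₀ * 1 ≤ C₀ * (c * (C₀⁻¹ + k * t)) := by
    exact mul_le_mul_of_nonneg_left h2 hC₀.le
  have h4 : C₀ * (c * (C₀⁻¹ + k * t)) = c * (1 + k * C₀ * t) := by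
    linear_combination c * mul_inv_cancel₀ hC₀.ne'
  linarith [h4 ▸ h3]

private lemma aux_convert_strict (k C₀ t c : ℝ) (hk : 0 < k) (hC₀ : 0 < C₀) (ht : 0 ≤ t)
    (hc : 0 < c) (h : c⁻¹ < C₀⁻¹ + k * t) : C₀ / (1 + k * C₀ * t) < c := by
  have h1 : 0 < 1 + k * C₀ * t := by positivity
  rw [div_lt_iff₀ h1]
  have h2 : (1:ℝ) < c * (C₀⁻¹ + k * t) := by
    calc (1:ℝ) = c * c⁻¹ := (mul_inv_cancel₀ hc.ne').symm
    _ < c * (C₀⁻¹ + k * t) := by gcongr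
  have h3 : C₀ * 1 < C₀ * (c * (C₀⁻¹ + k * t)) := by
    exact mul_lt_mul_of_pos_left h2 hC₀
  have h4 : C₀ * (c * (C₀⁻¹ + k * t)) = c * (1 + k * C₀ * t) := by
    linear_combination c * mul_inv_cancel₀ hC₀.ne'
  linarith [h4 ▸ h3]

/-- The solution stays positive. -/
private lemma aux_pos (k C₀ : ℝ) (hk : 0 < k) (hC₀ : 0 < C₀)
    (g C : ℝ → ℝ)
    (hg_nonpos : ∀ t ∈ Set.Ici (0 : ℝ), g t ≤ 0)
    (hinit : C 0 = C₀)
    (hderiv : ∀ t ∈ Set.Ici (0 : ℝ),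
      HasDerivWithinAt C (-k * ((C t) ^ 2 + g t)) (Set.Ici 0) t) :
    ∀ t ∈ Set.Ici (0:ℝ), 0 < C t := by
  have hCcont : ContinuousOn C (Set.Ici 0) := fun s hs =>
    (hderiv s hs).continuousWithinAt
  by_contra hcon
  push_neg at hcon
  obtain ⟨t₀, ht₀, hCt₀⟩ := hcon
  set A : Set ℝ := {t | t ∈ Set.Ici (0:ℝ) ∧ C t ≤ 0} with hA
  have hAne : A.Nonempty := ⟨t₀, ht₀, hCt₀⟩
  have hAbdd : BddBelow A := ⟨0, fun x hx => hx.1⟩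
  have hAclosed : IsClosed A := by
    have : A = Set.Ici 0 ∩ C ⁻¹' Set.Iic 0 := by
      ext x; simp [hA, Set.mem_Ici, Set.mem_Iic]
    rw [this]
    exact ContinuousOn.preimage_isClosed_of_isClosed hCcont isClosed_Ici isClosed_Iic
  set T := sInf A with hT
  have hTA : T ∈ A := hAclosed.csInf_mem hAne hAbdd
  have hT0 : 0 ≤ T := hTA.1
  have hTpos : 0 < T := by
    rcases hT0.lt_or_eq with h | h
    · exact h
    · exfalso; have := hTA.2; rw [← h, hinit] at this; linarith
  have hposlt : ∀ s ∈ Set.Ico (0:ℝ) T, 0 < C s := by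
    intro s hs
    by_contra hle
    push_neg at hle
    have : T ≤ s := csInf_le hAbdd ⟨hs.1, hle⟩
    exact absurd hs.2 (not_lt.mpr this)
  have hε : (0:ℝ) < (C₀⁻¹ + k * T)⁻¹ := by positivity
  have hbound : ∀ s ∈ Set.Ico (0:ℝ) T, (C₀⁻¹ + k * T)⁻¹ ≤ C s := by
    intro s hs
    have hinv : (C s)⁻¹ ≤ C₀⁻¹ + k * s :=
      aux_inv_bound k C₀ hk hC₀ g C hg_nonpos hinit hderiv s hs.1
        (fun u hu => hposlt u ⟨hu.1, lt_of_le_of_lt hu.2 hs.2⟩)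
    have hCs : 0 < C s := hposlt s hs
    have h1 : (C s)⁻¹ ≤ C₀⁻¹ + k * T := by nlinarith [hs.2.le]
    calc (C₀⁻¹ + k * T)⁻¹ ≤ ((C s)⁻¹)⁻¹ := by
          apply inv_anti₀ (by positivity) h1
    _ = C s := inv_inv _
  -- pass to the limit s → T⁻
  have hne : (Set.Ico (0:ℝ) T).Nonempty := ⟨0, le_refl 0, hTpos⟩
  have hTcl : T ∈ closure (Set.Ico (0:ℝ) T) := by
    rw [closure_Ico (by linarith : (0:ℝ) ≠ T)]
    exact Set.right_mem_Icc.mpr hT0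
  have hnb : (nhdsWithin T (Set.Ico (0:ℝ) T)).NeBot := mem_closure_iff_nhdsWithin_neBot.mp hTcl
  have htend : Filter.Tendsto C (nhdsWithin T (Set.Ico (0:ℝ) T)) (nhds (C T)) :=
    ((hCcont T hT0).mono (fun x hx => hx.1)).tendsto
  have hle : (C₀⁻¹ + k * T)⁻¹ ≤ C T :=
    ge_of_tendsto htend (Filter.eventually_of_mem self_mem_nhdsWithin hbound)
  linarith [hTA.2]

/-- Strict reciprocal bound under strictly negative forcing. -/
private lemma aux_inv_bound_strict (k C₀ : ℝ) (hk : 0 < k) (hC₀ : 0 < C₀)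
    (g C : ℝ → ℝ)
    (hg_neg : ∀ t > (0:ℝ), g t < 0)
    (hinit : C 0 = C₀)
    (hderiv : ∀ t ∈ Set.Ici (0 : ℝ),
      HasDerivWithinAt C (-k * ((C t) ^ 2 + g t)) (Set.Ici 0) t)
    (hpos : ∀ t ∈ Set.Ici (0:ℝ), 0 < C t)
    (b : ℝ) (hb : 0 < b) :
    (C b)⁻¹ < C₀⁻¹ + k * b := by
  set φ : ℝ → ℝ := fun s => C₀⁻¹ + k * s - (C s)⁻¹ with hφ
  have hCcont : ContinuousOn C (Set.Icc 0 b) := fun s hs =>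
    ((hderiv s hs.1).continuousWithinAt).mono Set.Icc_subset_Ici_self
  have hφcont : ContinuousOn φ (Set.Icc 0 b) := by
    apply ContinuousOn.sub
    · exact (continuousOn_const.add (continuousOn_const.mul continuousOn_id))
    · exact hCcont.inv₀ (fun s hs => (hpos s hs.1).ne')
  have hint : interior (Set.Icc (0:ℝ) b) = Set.Ioo 0 b := interior_Icc
  have hderivφ : ∀ s ∈ interior (Set.Icc (0:ℝ) b),
      HasDerivWithinAt φ (-k * g s / (C s)^2) (interior (Set.Icc 0 b)) s := by
    intro s hs
    rw [hint] at hs ⊢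
    have hs0 : (0:ℝ) ≤ s := hs.1.le
    have hCs : 0 < C s := hpos s hs0
    have h1 : HasDerivWithinAt (fun u => (C u)⁻¹)
        (-(-k * ((C s)^2 + g s)) / (C s)^2) (Set.Ioo 0 b) s :=
      (((hderiv s hs0)).mono (Set.Ioo_subset_Icc_self.trans Set.Icc_subset_Ici_self)).inv hCs.ne'
    have h2 : HasDerivWithinAt (fun u => C₀⁻¹ + k * u) k (Set.Ioo 0 b) s := by
      simpa using ((hasDerivWithinAt_id s (Set.Ioo (0:ℝ) b)).const_mul k).const_add C₀⁻¹
    have h3 := h2.sub h1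
    have heq : k - -(-k * ((C s)^2 + g s)) / (C s)^2 = -k * g s / (C s)^2 := by
      field_simp
      ring
    rw [heq] at h3
    exact h3
  have hmono : StrictMonoOn φ (Set.Icc 0 b) :=
    strictMonoOn_of_hasDerivWithinAt_pos (convex_Icc 0 b) hφcont hderivφ
      (by
        intro s hs
        rw [hint] at hs
        have hgs : g s < 0 := hg_neg s hs.1
        have hCs : 0 < C s := hpos s hs.1.le
        have h : 0 < -k * g s := by nlinarith
        positivity)
  have h0 : φ 0 < φ b := hmono (Set.left_mem_Icc.mpr hb.le) (Set.right_mem_Icc.mpr hb.le) hb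
  have hφ0 : φ 0 = 0 := by simp [hφ, hinit]
  rw [hφ0] at h0
  simp only [hφ] at h0
  linarith

/-- Any solution of the mean-concentration equation with nonpositive forcing is bounded
below by the well-mixed solution `C₀ / (1 + k C₀ t)`; if the forcing is strictly negative
for positive times, the bound is strict for `t > 0`. -/
theorem meanConcentration_lower_bound (k C₀ : ℝ) (hk : 0 < k) (hC₀ : 0 < C₀)
    (g C : ℝ → ℝ)
    (hg_cont : ContinuousOn g (Set.Ici 0))
    (hg_nonpos : ∀ t ∈ Set.Ici (0 : ℝ), g t ≤ 0)
    (hinit : C 0 = C₀)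
    (hderiv : ∀ t ∈ Set.Ici (0 : ℝ),
      HasDerivWithinAt C (-k * ((C t) ^ 2 + g t)) (Set.Ici 0) t) :
    (∀ t ∈ Set.Ici (0 : ℝ), C₀ / (1 + k * C₀ * t) ≤ C t) ∧
    ((∀ t > (0 : ℝ), g t < 0) → ∀ t > (0 : ℝ), C₀ / (1 + k * C₀ * t) < C t) := by
  have hpos : ∀ t ∈ Set.Ici (0:ℝ), 0 < C t :=
    aux_pos k C₀ hk hC₀ g C hg_nonpos hinit hderiv
  constructor
  · intro t ht
    have hinv : (C t)⁻¹ ≤ C₀⁻¹ + k * t :=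
      aux_inv_bound k C₀ hk hC₀ g C hg_nonpos hinit hderiv t ht
        (fun u hu => hpos u hu.1)
    exact aux_convert k C₀ t (C t) hk hC₀ ht (hpos t ht) hinv
  · intro hg_neg t ht
    have hinv : (C t)⁻¹ < C₀⁻¹ + k * t :=
      aux_inv_bound_strict k C₀ hk hC₀ g C hg_neg hinit hderiv hpos t ht
    exact aux_convert_strict k C₀ t (C t) hk hC₀ ht.le (hpos t ht.le) hinv
end

section
/- The difference between the two mean concentrations is controlled by the difference of their forcing terms through the weighted Grönwall-type estimate |C̄_G(t) − C̄_δ(t)| ≤ (k/(1 + k C₀ t)²) ∫₀ᵗ |g_δ(τ) − g_G(τ)| (1 + k C₀ τ)² dτ for all t ≥ 0. -/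
/-!
Both mean concentrations lie above `C₀ / (1 + k C₀ t)`, the solution of the unforced equation
`y' = -k y²`: the forcing terms are nonpositive. With `u = 1 + k C₀ t` and `D = C̄_G - C̄_δ`,
`(u² D)' = k u D (2 C₀ - u (C̄_G + C̄_δ)) + k u² (g_δ - g_G)`,
and the first term has the sign of `-D` by the lower bounds. Hence `u² D` can only grow through
the forcing difference, and a comparison argument with `k ∫₀ᵗ |g_δ - g_G| u²` bounds it from
above; exchanging the two solutions bounds it from below.
-/

open Set Real

-- Compare with the barriers `ε e^{(|L| + 1)(y - x)}` and let `ε → 0`.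
theorem image_nonpos_of_deriv_right_le_mul_of_pos {f f' : ℝ → ℝ} {a b L : ℝ}
    (hf : ContinuousOn f (Icc a b)) (hf' : ∀ x ∈ Ico a b, HasDerivWithinAt f (f' x) (Ici x) x)
    (ha : f a ≤ 0) (bound : ∀ x ∈ Ico a b, 0 < f x → f' x ≤ L * f x) :
    ∀ ⦃x⦄, x ∈ Icc a b → f x ≤ 0 := by
  intro x hx
  refine le_of_forall_pos_le_add fun ε hε => ?_
  set K := |L| + 1
  have hB : ∀ y, HasDerivAt (fun y => ε * exp (K * (y - x))) (K * (ε * exp (K * (y - x)))) y :=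
    fun y => by
      simpa [mul_comm, mul_left_comm] using
        (((hasDerivAt_id y).sub_const x).const_mul K).exp.const_mul ε
  have hfB := image_le_of_deriv_right_lt_deriv_boundary hf hf' (ha.trans (by positivity)) hB
    (fun y hy hfy => ?_) hx
  · simpa using hfB
  have hpos : 0 < f y := hfy ▸ by positivity
  calc f' y ≤ L * f y := bound y hy hpos
    _ < K * f y := mul_lt_mul_of_pos_right ((le_abs_self L).trans_lt (lt_add_one _)) hpos
    _ = K * (ε * exp (K * (y - x))) := by rw [hfy]

theorem hasDerivWithinAt_integral_Ici {f : ℝ → ℝ} {a x : ℝ} (hf : ContinuousOn f (Ici a))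
    (hx : a ≤ x) : HasDerivWithinAt (fun u => ∫ τ in a..u, f τ) (f x) (Ici x) x :=
  intervalIntegral.integral_hasDerivWithinAt_right
    ((hf.mono fun _ hτ => (uIcc_of_le hx ▸ hτ).1).intervalIntegrable)
    ((hf.mono (Ioi_subset_Ici hx)).stronglyMeasurableAtFilter_nhdsWithin measurableSet_Ioi x)
    ((hf x hx).mono (Ioi_subset_Ici hx))

theorem hasDerivAt_one_add_mul (c x : ℝ) : HasDerivAt (fun t => 1 + c * t) c x := by
  simpa using ((hasDerivAt_id x).const_mul c).const_add 1

def IsRiccatiSolution (k : ℝ) (g C : ℝ → ℝ) : Prop :=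
  ∀ t ∈ Ici (0 : ℝ), HasDerivWithinAt C (-k * (C t ^ 2 + g t)) (Ici 0) t

namespace IsRiccatiSolution

variable {k C₀ : ℝ} {g C : ℝ → ℝ}

theorem continuousOn (hC : IsRiccatiSolution k g C) : ContinuousOn C (Ici 0) :=
  fun t ht => (hC t ht).continuousWithinAt

theorem hasDerivWithinAt_Ici (hC : IsRiccatiSolution k g C) {t : ℝ} (ht : 0 ≤ t) :
    HasDerivWithinAt C (-k * (C t ^ 2 + g t)) (Ici t) t :=
  (hC t ht).mono (Ici_subset_Ici.2 ht)

theorem le_one_add_mul_mul (hC : IsRiccatiSolution k g C) (hk : 0 ≤ k) (hC₀ : 0 ≤ C₀)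
    (hg : ∀ t ∈ Ici (0 : ℝ), g t ≤ 0) (h0 : C 0 = C₀) :
    ∀ t ∈ Ici (0 : ℝ), C₀ ≤ (1 + k * C₀ * t) * C t := by
  rintro t (ht : 0 ≤ t)
  obtain ⟨M, hM⟩ := isCompact_Icc.exists_bound_of_continuousOn
    (hC.continuousOn.mono (Icc_subset_Ici_self : Icc 0 t ⊆ Ici 0))
  -- `f = C₀ - u C` has `f' = -k C f + k u g ≤ k M f` wherever `f > 0`.
  have key := image_nonpos_of_deriv_right_le_mul_of_pos (L := k * M)
    (f := fun x => C₀ - (1 + k * C₀ * x) * C x)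
    (f' := fun x => -(k * C₀ * C x + (1 + k * C₀ * x) * (-k * (C x ^ 2 + g x))))
    (continuousOn_const.sub ((by fun_prop : Continuous fun x => 1 + k * C₀ * x).continuousOn.mul
      (hC.continuousOn.mono Icc_subset_Ici_self)))
    (fun x hx => ((hasDerivAt_one_add_mul _ x).hasDerivWithinAt.mul
      (hC.hasDerivWithinAt_Ici hx.1)).const_sub C₀)
    (by simp [h0]) (fun x hx hpos => ?_) (right_mem_Icc.2 ht)
  · simpa using key
  have hu : 0 ≤ 1 + k * C₀ * x := by have := hx.1; positivity
  have hforcing : k * ((1 + k * C₀ * x) * g x) ≤ 0 :=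
    mul_nonpos_of_nonneg_of_nonpos hk (mul_nonpos_of_nonneg_of_nonpos hu (hg x hx.1))
  have hbounded : 0 ≤ k * (M + C x) * (C₀ - (1 + k * C₀ * x) * C x) := by
    have := neg_le_of_abs_le (hM x (Ico_subset_Icc_self hx))
    exact mul_nonneg (mul_nonneg hk (by linarith)) hpos.le
  linear_combination hforcing + hbounded

theorem sq_mul_sub_le_integral {gδ gG Cδ CG : ℝ → ℝ}
    (hδ : IsRiccatiSolution k gδ Cδ) (hG : IsRiccatiSolution k gG CG)
    (hk : 0 ≤ k) (hC₀ : 0 ≤ C₀)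
    (hgδ_cont : ContinuousOn gδ (Ici 0)) (hgG_cont : ContinuousOn gG (Ici 0))
    (hgδ : ∀ t ∈ Ici (0 : ℝ), gδ t ≤ 0) (hgG : ∀ t ∈ Ici (0 : ℝ), gG t ≤ 0)
    (h0δ : Cδ 0 = C₀) (h0G : CG 0 = C₀) :
    ∀ t ∈ Ici (0 : ℝ), (1 + k * C₀ * t) ^ 2 * (CG t - Cδ t) ≤
      k * ∫ τ in (0 : ℝ)..t, |gδ τ - gG τ| * (1 + k * C₀ * τ) ^ 2 := by
  rintro t (ht : 0 ≤ t)
  set w := fun τ => |gδ τ - gG τ| * (1 + k * C₀ * τ) ^ 2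
  have hw : ContinuousOn w (Ici 0) := ((hgδ_cont.sub hgG_cont).abs).mul (by fun_prop)
  have hsq (x : ℝ) :
      HasDerivAt (fun x => (1 + k * C₀ * x) ^ 2) (2 * (1 + k * C₀ * x) * (k * C₀)) x := by
    simpa using (hasDerivAt_one_add_mul (k * C₀) x).fun_pow 2
  have hW : ContinuousOn (fun x => ∫ τ in (0 : ℝ)..x, w τ) (Icc 0 t) := by
    rw [← uIcc_of_le ht]
    exact intervalIntegral.continuousOn_primitive_interval' ((hw.mono
      (uIcc_of_le ht ▸ Icc_subset_Ici_self)).intervalIntegrable) left_mem_uIcc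
  have key := image_nonpos_of_deriv_right_le_mul_of_pos (L := 0)
    (f := fun x => (1 + k * C₀ * x) ^ 2 * (CG x - Cδ x) - k * ∫ τ in (0 : ℝ)..x, w τ)
    (f' := fun x => 2 * (1 + k * C₀ * x) * (k * C₀) * (CG x - Cδ x) +
      (1 + k * C₀ * x) ^ 2 * (-k * (CG x ^ 2 + gG x) - -k * (Cδ x ^ 2 + gδ x)) - k * w x)
    (((by fun_prop : Continuous fun x => (1 + k * C₀ * x) ^ 2).continuousOn.mul
      ((hG.continuousOn.sub hδ.continuousOn).mono Icc_subset_Ici_self)).sub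
      (continuousOn_const.mul hW))
    (fun x hx => ((hsq x).hasDerivWithinAt.mul
      ((hG.hasDerivWithinAt_Ici hx.1).sub (hδ.hasDerivWithinAt_Ici hx.1))).sub
      ((hasDerivWithinAt_integral_Ici hw hx.1).const_mul k))
    (by simp [h0δ, h0G]) (fun x hx hpos => ?_) (right_mem_Icc.2 ht)
  · simpa [sub_nonpos] using key
  have hx := hx.1
  have hu : 0 ≤ 1 + k * C₀ * x := by positivity
  have hD : 0 < CG x - Cδ x := by
    have : 0 ≤ ∫ τ in (0 : ℝ)..x, w τ :=
      intervalIntegral.integral_nonneg hx fun τ _ => by positivity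
    exact pos_of_mul_pos_right (by nlinarith : 0 < (1 + k * C₀ * x) ^ 2 * (CG x - Cδ x))
      (sq_nonneg _)
  have hdamping : k * (1 + k * C₀ * x) * (CG x - Cδ x) *
      (2 * C₀ - (1 + k * C₀ * x) * CG x - (1 + k * C₀ * x) * Cδ x) ≤ 0 := by
    have := hG.le_one_add_mul_mul hk hC₀ hgG h0G x hx
    have := hδ.le_one_add_mul_mul hk hC₀ hgδ h0δ x hx
    exact mul_nonpos_of_nonneg_of_nonpos (by positivity) (by linarith)
  have hforcing : k * (1 + k * C₀ * x) ^ 2 * ((gδ x - gG x) - |gδ x - gG x|) ≤ 0 :=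
    mul_nonpos_of_nonneg_of_nonpos (by positivity) (sub_nonpos.2 (le_abs_self _))
  linear_combination hdamping + hforcing

end IsRiccatiSolution

/-- Weighted Grönwall-type estimate: the difference between the two mean concentrations is
controlled by the difference of their forcing terms,
`|C̄_G(t) − C̄_δ(t)| ≤ (k/(1 + k C₀ t)²) ∫₀ᵗ |g_δ(τ) − g_G(τ)| (1 + k C₀ τ)² dτ`. -/
theorem meanConcentration_difference_bound (k C₀ : ℝ) (hk : 0 < k) (hC₀ : 0 < C₀)
    (gδ gG Cδ CG : ℝ → ℝ)
    (hgδ_cont : ContinuousOn gδ (Set.Ici 0))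
    (hgG_cont : ContinuousOn gG (Set.Ici 0))
    (hgδ_nonpos : ∀ t ∈ Set.Ici (0 : ℝ), gδ t ≤ 0)
    (hgG_nonpos : ∀ t ∈ Set.Ici (0 : ℝ), gG t ≤ 0)
    (hinitδ : Cδ 0 = C₀) (hinitG : CG 0 = C₀)
    (hderivδ : ∀ t ∈ Set.Ici (0 : ℝ),
      HasDerivWithinAt Cδ (-k * ((Cδ t) ^ 2 + gδ t)) (Set.Ici 0) t)
    (hderivG : ∀ t ∈ Set.Ici (0 : ℝ),
      HasDerivWithinAt CG (-k * ((CG t) ^ 2 + gG t)) (Set.Ici 0) t) :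
    ∀ t ∈ Set.Ici (0 : ℝ),
      |CG t - Cδ t| ≤ k / (1 + k * C₀ * t) ^ 2 *
        ∫ τ in (0 : ℝ)..t, |gδ τ - gG τ| * (1 + k * C₀ * τ) ^ 2 := by
  intro t ht
  have hu : 0 < (1 + k * C₀ * t) ^ 2 := by have : (0 : ℝ) ≤ t := ht; positivity
  have hG := IsRiccatiSolution.sq_mul_sub_le_integral hderivδ hderivG hk.le hC₀.le hgδ_cont
    hgG_cont hgδ_nonpos hgG_nonpos hinitδ hinitG t ht
  have hδ := IsRiccatiSolution.sq_mul_sub_le_integral hderivG hderivδ hk.le hC₀.le hgG_cont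
    hgδ_cont hgG_nonpos hgδ_nonpos hinitG hinitδ t ht
  simp only [abs_sub_comm (gG _)] at hδ
  rw [div_mul_eq_mul_div, abs_le, neg_le, le_div_iff₀ hu, le_div_iff₀ hu]
  exact ⟨by linear_combination hδ, by linear_combination hG⟩
end
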